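/- arXiv:1202.5720 — 2 statements merged into one kernel-verified Lean document; each statement's English description precedes it below -/
import Mathlib

section
/- For p ≥ m ≥ 1 and q ≥ s ≥ 1, there is a graph homomorphism from M_p(C_{2q+1}) to M_m(C_{2s+1}). -/
open SimpleGraph

/-- A graph is a *cover graph* if it is the underlying graph of the Hasse diagram of a
partially ordered set, i.e. adjacency coincides with the (symmetrized) covering relation. -/
def SimpleGraph.IsCoverGraph {V : Type*} (G : SimpleGraph V) : Prop :=
  ∃ p : PartialOrder V, ∀ a b : V,
    G.Adj a b ↔ (@CovBy V p.toPreorder.toLT a b ∨ @CovBy V p.toPreorder.toLT b a)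

/-- The direct (tensor/categorical) product of two simple graphs. -/
def SimpleGraph.tensorProd {α β : Type*} (G : SimpleGraph α) (H : SimpleGraph β) :
    SimpleGraph (α × β) where
  Adj x y := G.Adj x.1 y.1 ∧ H.Adj x.2 y.2
  symm := ⟨fun _ _ h => ⟨h.1.symm, h.2.symm⟩⟩
  loopless := ⟨fun _ h => G.loopless.irrefl _ h.1⟩

/-- The generalized Mycielskian `M_m(G)`: levels `0,…,m` (each a copy of `V`), the edges of `G`
on level `0`, edges between consecutive levels induced by the edges of `G`, and a root `none`
adjacent to all of level `m`. -/
def SimpleGraph.Myc {V : Type*} (m : ℕ) (G : SimpleGraph V) :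
    SimpleGraph (Option (Fin (m + 1) × V)) where
  Adj x y :=
    match x, y with
    | some (i, j), some (k, l) =>
        G.Adj j l ∧ ((i.val = 0 ∧ k.val = 0) ∨ i.val + 1 = k.val ∨ k.val + 1 = i.val)
    | some (i, _), none => i.val = m
    | none, some (k, _) => k.val = m
    | none, none => False
  symm := by
    constructor
    rintro (_ | ⟨i, j⟩) (_ | ⟨k, l⟩) h
    · exact h
    · exact h
    · exact h
    · exact ⟨h.1.symm, by omega⟩
  loopless := by
    constructor
    rintro (_ | ⟨i, j⟩) h
    · exact h
    · exact G.loopless.irrefl j h.1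

/-! A homomorphism `G →g H` induces `M_m(G) →g M_m(H)` levelwise, and `M_p(G) →g M_m(G)` by
collapsing the `p - m` lowest levels onto level `0`; it remains to fold `C_{2q+1}` onto
`C_{2s+1}`. -/

namespace SimpleGraph

theorem cycleGraph_adj_iff_val {n : ℕ} (hn : 2 ≤ n) {u v : Fin n} :
    (cycleGraph n).Adj u v ↔ u.val + 1 = v.val ∨ v.val + 1 = u.val ∨
      (u.val + 1 = n ∧ v.val = 0) ∨ (v.val + 1 = n ∧ u.val = 0) := by
  obtain ⟨n, rfl⟩ : ∃ k, n = k + 2 := ⟨n - 2, by omega⟩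
  rw [cycleGraph_adj, sub_eq_iff_eq_add', sub_eq_iff_eq_add', Fin.ext_iff, Fin.ext_iff,
    Fin.val_add_one, Fin.val_add_one]
  simp only [Fin.ext_iff, Fin.val_last]
  split_ifs <;> omega

/-- The vertices `2s+1, …, 2q` are sent alternately to `0` and `1`, so the arc from `2s` to `0`
through them becomes the edge `{2s, 0}` followed by a walk bouncing on the edge `{0, 1}`. -/
def cycleGraph.foldOdd {q s : ℕ} (hs : 1 ≤ s) (hsq : s ≤ q) :
    cycleGraph (2 * q + 1) →g cycleGraph (2 * s + 1) where
  toFun j := if h : j.val ≤ 2 * s then ⟨j.val, by omega⟩ else ⟨(j.val + 1) % 2, by omega⟩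
  map_rel' {u v} huv := by
    rw [cycleGraph_adj_iff_val (by omega)] at huv ⊢
    split_ifs <;> dsimp only <;> omega

namespace Myc

variable {V W : Type*} {G : SimpleGraph V}

def map (m : ℕ) {H : SimpleGraph W} (f : G →g H) : Myc m G →g Myc m H where
  toFun := Option.map (Prod.map id f)
  map_rel' := by
    rintro (_ | ⟨i, j⟩) (_ | ⟨k, l⟩) h
    · exact h
    · exact h
    · exact h
    · exact ⟨f.map_adj h.1, h.2⟩

/-- Levels within distance `m` of the root keep that distance; all lower levels collapse
onto level `0`. -/
def collapseLevel {m p : ℕ} (i : Fin (p + 1)) : Fin (m + 1) :=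
  ⟨m - min m (p - i.val), by omega⟩

def collapseLevels {m p : ℕ} (hmp : m ≤ p) (G : SimpleGraph V) : Myc p G →g Myc m G where
  toFun := Option.map (Prod.map collapseLevel id)
  map_rel' := by
    rintro (_ | ⟨⟨i, _⟩, j⟩) (_ | ⟨⟨k, _⟩, l⟩) h
    · exact h
    · change k = p at h
      change m - min m (p - k) = m
      omega
    · change i = p at h
      change m - min m (p - i) = m
      omega
    · obtain ⟨hadj, hlev⟩ := h
      refine ⟨hadj, ?_⟩
      change (i = 0 ∧ k = 0) ∨ i + 1 = k ∨ k + 1 = i at hlev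
      change (m - min m (p - i) = 0 ∧ m - min m (p - k) = 0) ∨
        m - min m (p - i) + 1 = m - min m (p - k) ∨ m - min m (p - k) + 1 = m - min m (p - i)
      omega

end Myc

end SimpleGraph

theorem myc_hom_exists_general (p m q s : ℕ) (hmp : m ≤ p) (hs : 1 ≤ s) (hsq : s ≤ q) :
    Nonempty (SimpleGraph.Myc p (cycleGraph (2 * q + 1)) →g
              SimpleGraph.Myc m (cycleGraph (2 * s + 1))) :=
  ⟨(Myc.map m (cycleGraph.foldOdd hs hsq)).comp (Myc.collapseLevels hmp _)⟩

/-- For `p ≥ m ≥ 1` and `q ≥ s ≥ 1`, there is a graph homomorphism from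
`M_p(C_{2q+1})` to `M_m(C_{2s+1})`. -/
theorem myc_hom_exists (p m q s : ℕ) (hm : 1 ≤ m) (hmp : m ≤ p) (hs : 1 ≤ s) (hsq : s ≤ q) :
    Nonempty (SimpleGraph.Myc p (cycleGraph (2 * q + 1)) →g
              SimpleGraph.Myc m (cycleGraph (2 * s + 1))) :=
  myc_hom_exists_general p m q s hmp hs hsq
end

section
/- For s > 1 and m ≥ 1, the circular chromatic number of M_m(C_{2s+1}) equals 4. -/
open SimpleGraph

open scoped Classical in
/-- `D` is an acyclic orientation of `G`: every arc is an edge, each edge is oriented in exactly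
one direction, and there are no directed cycles. -/
def SimpleGraph.IsAcyclicOrientation {V : Type*} (G : SimpleGraph V) (D : V → V → Prop) : Prop :=
  (∀ a b, D a b → G.Adj a b) ∧ (∀ a b, G.Adj a b → (D a b ↔ ¬ D b a)) ∧
    ∀ a, ¬ Relation.TransGen D a a

open scoped Classical in
/-- The number of forward arcs of the cycle `C` with respect to the orientation `D`. -/
noncomputable def SimpleGraph.fwdArcs {V : Type*} (G : SimpleGraph V) (D : V → V → Prop)
    {v : V} (C : G.Walk v v) : ℕ :=
  (C.darts.filter fun d => decide (D d.toProd.1 d.toProd.2)).length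

open scoped Classical in
/-- The number of backward arcs of the cycle `C` with respect to the orientation `D`. -/
noncomputable def SimpleGraph.bwdArcs {V : Type*} (G : SimpleGraph V) (D : V → V → Prop)
    {v : V} (C : G.Walk v v) : ℕ :=
  (C.darts.filter fun d => decide (D d.toProd.2 d.toProd.1)).length

/-- The imbalance `Imb(D)` of an orientation `D`: the maximum over all cycles `C` of
`max (|C|/|(C,D)⁺|) (|C|/|(C,D)⁻|)`, with the convention that it is `2` if `G` has no cycles. -/
noncomputable def SimpleGraph.Imb {V : Type*} (G : SimpleGraph V) (D : V → V → Prop) : ℝ :=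
  sSup (insert 2 {x : ℝ | ∃ (v : V) (C : G.Walk v v), C.IsCycle ∧
    x = max ((C.length : ℝ) / (G.fwdArcs D C : ℝ)) ((C.length : ℝ) / (G.bwdArcs D C : ℝ))})

/-- The circular chromatic number, via the Goddyn–Tarsi–Zhang characterization:
the minimum imbalance over all acyclic orientations. -/
noncomputable def SimpleGraph.circChrom {V : Type*} (G : SimpleGraph V) : ℝ :=
  sInf {x : ℝ | ∃ D : V → V → Prop, G.IsAcyclicOrientation D ∧ x = G.Imb D}

/-!
Upper bound: orient every edge of a proper `k`-colouring towards the larger colour. Around a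
cycle the colour differences sum to zero, a forward arc contributes at most `k - 1` and a
backward arc at most `-1`, so at least a `1 / k` fraction of the arcs is forward, and likewise
backward. `M_m(C_n)` is `4`-colourable: colour level `m` with a new colour.

Lower bound: if an acyclic orientation had imbalance `< 4`, every `4`-cycle would carry exactly
two forward arcs, so the `±1`-valued orientation sign has the same sum along the two halves of
any `4`-cycle. Pushing the closed zig-zag walk between levels `i` and `i + 1` of `M_m(C_n)`
across such `4`-cycles, from level `0` up to the root, shows that twice the signed length of the
odd base cycle is `0`; but a sum of an odd number of `±1`s is odd.
-/

theorem odd_sum_of_forall_odd {ι : Type*} [Fintype ι] {f : ι → ℤ}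
    (hcard : Odd (Fintype.card ι)) (hf : ∀ i, Odd (f i)) : Odd (∑ i, f i) := by
  have hsplit : ∑ i, f i = ∑ i, (f i - 1) + Fintype.card ι := by
    simp [Finset.sum_sub_distrib]
  rw [hsplit]
  exact (Finset.even_sum _ fun i _ => (hf i).sub_odd odd_one).add_odd (by exact_mod_cast hcard)

theorem Fin.ne_add_one_add_one {n : ℕ} [NeZero n] (hn : 3 ≤ n) (j : Fin n) :
    j ≠ j + 1 + 1 := by
  rw [ne_eq, add_assoc, left_eq_add, Fin.ext_iff, Fin.val_add, Fin.val_one', Fin.val_zero,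
    Nat.mod_eq_of_lt (by omega : 1 < n), Nat.mod_eq_of_lt (by omega : 1 + 1 < n)]
  omega

namespace SimpleGraph

variable {V : Type*} {G : SimpleGraph V} {D : V → V → Prop} {u v : V}

open scoped Classical in
noncomputable def orientSign (D : V → V → Prop) (x y : V) : ℤ := if D x y then 1 else -1

theorem odd_orientSign (D : V → V → Prop) (x y : V) : Odd (orientSign D x y) := by
  unfold orientSign
  split_ifs <;> decide

def IsOrientation (G : SimpleGraph V) (D : V → V → Prop) : Prop :=
  ∀ x y, G.Adj x y → (D x y ↔ ¬ D y x)

theorem IsAcyclicOrientation.isOrientation (hD : G.IsAcyclicOrientation D) :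
    G.IsOrientation D :=
  hD.2.1

theorem IsOrientation.orientSign_swap (hD : G.IsOrientation D) {x y : V} (h : G.Adj x y) :
    orientSign D y x = -orientSign D x y := by
  unfold orientSign
  by_cases hxy : D x y
  · simp [hxy, (hD x y h).mp hxy]
  · simp [hxy, (hD y x h.symm).mpr hxy]

theorem Walk.sum_darts_sub (f : V → ℤ) (p : G.Walk u v) :
    (p.darts.map fun d => f d.snd - f d.fst).sum = f v - f u := by
  induction p with
  | nil => simp
  | cons h q ih =>
    rw [Walk.darts_cons, List.map_cons, List.sum_cons, ih]
    ring

theorem Walk.reflTransGen_of_forall_darts {R : V → V → Prop} (p : G.Walk u v)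
    (h : ∀ d ∈ p.darts, R d.fst d.snd) : Relation.ReflTransGen R u v := by
  induction p with
  | nil => exact .refl
  | cons hadj q ih =>
    simp only [Walk.darts_cons, List.mem_cons, forall_eq_or_imp] at h
    exact .head h.1 (ih h.2)

theorem Walk.transGen_of_forall_darts {R : V → V → Prop} (p : G.Walk u v) (hp : ¬ p.Nil)
    (h : ∀ d ∈ p.darts, R d.fst d.snd) : Relation.TransGen R u v := by
  cases p with
  | nil => exact absurd Walk.Nil.nil hp
  | cons hadj q =>
    simp only [Walk.darts_cons, List.mem_cons, forall_eq_or_imp] at h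
    exact .head' h.1 (q.reflTransGen_of_forall_darts h.2)

open scoped Classical in
theorem IsOrientation.bwdArcs_eq_length_filter_not (hD : G.IsOrientation D) (C : G.Walk v v) :
    G.bwdArcs D C = (C.darts.filter fun d => !decide (D d.fst d.snd)).length := by
  unfold bwdArcs
  congr 1
  refine List.filter_congr fun d _ => ?_
  simp [hD d.snd d.fst d.adj.symm]

theorem IsOrientation.fwdArcs_add_bwdArcs (hD : G.IsOrientation D) (C : G.Walk v v) :
    G.fwdArcs D C + G.bwdArcs D C = C.length := by
  rw [hD.bwdArcs_eq_length_filter_not, fwdArcs, ← C.length_darts]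
  exact (List.length_eq_length_filter_add _).symm

theorem IsOrientation.sum_orientSign_darts (hD : G.IsOrientation D) (C : G.Walk v v) :
    (C.darts.map fun d => orientSign D d.fst d.snd).sum = G.fwdArcs D C - G.bwdArcs D C := by
  rw [hD.bwdArcs_eq_length_filter_not]
  unfold orientSign fwdArcs
  rw [List.sum_map_ite]
  simp only [List.map_const', List.sum_replicate, Int.nsmul_eq_mul, mul_one, mul_neg,
    sub_eq_add_neg, Classical.decide_not]
  congr!

theorem IsAcyclicOrientation.fwdArcs_pos (hD : G.IsAcyclicOrientation D) {C : G.Walk v v}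
    (hC : ¬ C.Nil) : 0 < G.fwdArcs D C := by
  by_contra! h0
  have hback : ∀ d ∈ C.darts, D d.snd d.fst := by
    simp only [fwdArcs, nonpos_iff_eq_zero, List.length_eq_zero_iff, List.filter_eq_nil_iff,
      decide_eq_true_eq] at h0
    exact fun d hd => (hD.isOrientation d.snd d.fst d.adj.symm).mpr (h0 d hd)
  exact hD.2.2 v (Relation.TransGen.swap v v (C.transGen_of_forall_darts hC hback))

theorem IsAcyclicOrientation.bwdArcs_pos (hD : G.IsAcyclicOrientation D) {C : G.Walk v v}
    (hC : ¬ C.Nil) : 0 < G.bwdArcs D C := by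
  by_contra! h0
  have hforw : ∀ d ∈ C.darts, D d.fst d.snd := by
    simp only [bwdArcs, nonpos_iff_eq_zero, List.length_eq_zero_iff, List.filter_eq_nil_iff,
      decide_eq_true_eq] at h0
    exact fun d hd => (hD.isOrientation d.fst d.snd d.adj).mpr (h0 d hd)
  exact hD.2.2 v (C.transGen_of_forall_darts hC hforw)

theorem Walk.IsCycle.le_imb [Fintype V] (D : V → V → Prop) {C : G.Walk v v} (hC : C.IsCycle) :
    max ((C.length : ℝ) / G.fwdArcs D C) ((C.length : ℝ) / G.bwdArcs D C) ≤ G.Imb D := by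
  refine le_csSup ⟨max 2 (Fintype.card V), ?_⟩ (Set.mem_insert_of_mem _ ⟨v, C, hC, rfl⟩)
  rintro x (rfl | ⟨w, C', hC', rfl⟩)
  · exact le_max_left _ _
  · have hlen : C'.length ≤ Fintype.card V := by
      have := hC'.support_nodup.length_le_card
      rw [List.length_tail, Walk.length_support] at this
      omega
    have hdiv : ∀ k : ℕ, (C'.length : ℝ) / k ≤ Fintype.card V := fun k => by
      rcases k.eq_zero_or_pos with rfl | hk
      · simp
      · exact (div_le_self (Nat.cast_nonneg _) (by exact_mod_cast hk)).trans
          (by exact_mod_cast hlen)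
    exact (max_le (hdiv _) (hdiv _)).trans (le_max_right _ _)

theorem IsAcyclicOrientation.orientSign_square [Fintype V] (hD : G.IsAcyclicOrientation D)
    (hImb : G.Imb D < 4) {a b c d : V} (hab : G.Adj a b) (hbc : G.Adj b c) (hcd : G.Adj c d)
    (hda : G.Adj d a) (hac : a ≠ c) (hbd : b ≠ d) :
    orientSign D a b + orientSign D b c = orientSign D a d + orientSign D d c := by
  let C : G.Walk a a := .cons hab (.cons hbc (.cons hcd (.cons hda .nil)))
  have hC : C.IsCycle := by
    simp [C, Walk.cons_isCycle_iff, hab.ne, hbc.ne, hcd.ne, hda.ne, hab.ne', hda.ne', hac,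
      hac.symm, hbd]
  have two_le : ∀ k : ℕ, 0 < k → (C.length : ℝ) / k ≤ G.Imb D → 2 ≤ k := by
    intro k hk hle
    by_contra! hk1
    obtain rfl : k = 1 := by omega
    norm_num [C] at hle
    linarith
  have hfwd := two_le _ (hD.fwdArcs_pos hC.not_nil) ((le_max_left _ _).trans (hC.le_imb D))
  have hbwd := two_le _ (hD.bwdArcs_pos hC.not_nil) ((le_max_right _ _).trans (hC.le_imb D))
  have hlen : G.fwdArcs D C + G.bwdArcs D C = 4 := hD.isOrientation.fwdArcs_add_bwdArcs C
  have hsign : orientSign D a b + orientSign D b c + orientSign D c d + orientSign D d a =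
      G.fwdArcs D C - G.bwdArcs D C := by
    simpa [C, add_assoc] using hD.isOrientation.sum_orientSign_darts C
  rw [hD.isOrientation.orientSign_swap hcd.symm, hD.isOrientation.orientSign_swap hda.symm]
    at hsign
  omega

open scoped Classical in
theorem length_le_mul_fwdArcs (f : V → ℤ) (k : ℤ)
    (hf : ∀ x y, G.Adj x y → f y - f x ≤ k - 1)
    (hback : ∀ x y, G.Adj x y → ¬ D x y → f y < f x) (C : G.Walk v v) :
    (C.length : ℤ) ≤ k * G.fwdArcs D C := by
  have hle : (C.darts.map fun d => f d.snd - f d.fst).sum ≤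
      (C.darts.map fun d => if D d.fst d.snd then k - 1 else -1).sum := by
    refine List.sum_le_sum fun d _ => ?_
    split_ifs with h
    · exact hf _ _ d.adj
    · linarith [hback _ _ d.adj h]
  rw [C.sum_darts_sub, List.sum_map_ite] at hle
  simp only [sub_self, List.map_const', List.sum_replicate, nsmul_eq_mul, decide_not] at hle
  rw [fwdArcs, ← C.length_darts,
    List.length_eq_length_filter_add (fun d => decide (D d.fst d.snd))]
  push_cast
  linarith

theorem Coloring.isAcyclicOrientation {α : Type*} [LinearOrder α] (c : G.Coloring α) :
    G.IsAcyclicOrientation fun x y => G.Adj x y ∧ c x < c y := by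
  refine ⟨fun _ _ h => h.1, fun x y h => ⟨?_, fun hn => ?_⟩, fun x hx => ?_⟩
  · rintro ⟨-, hlt⟩ ⟨-, hgt⟩
    exact lt_asymm hlt hgt
  · exact ⟨h, (c.valid h).lt_or_gt.resolve_right fun hgt => hn ⟨h.symm, hgt⟩⟩
  · have : Relation.TransGen (· < ·) (c x) (c x) :=
      Relation.TransGen.lift c (fun _ _ h => h.2) x x hx
    rw [Relation.transGen_eq_self] at this
    exact lt_irrefl _ this

theorem Coloring.imb_le {k : ℕ} (c : G.Coloring (Fin k)) (hk : 2 ≤ k) :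
    G.Imb (fun x y => G.Adj x y ∧ c x < c y) ≤ k := by
  refine Real.sSup_le ?_ (by positivity)
  rintro x (rfl | ⟨v, C, -, rfl⟩)
  · exact_mod_cast hk
  have hne : ∀ x y, G.Adj x y → (c x : ℕ) < c y ∨ (c y : ℕ) < c x := fun x y h =>
    Fin.val_ne_iff.mpr (c.valid h) |>.lt_or_gt
  have hfwd := length_le_mul_fwdArcs (D := fun x y => G.Adj x y ∧ c x < c y)
    (fun x => ((c x : ℕ) : ℤ)) k (fun x y _ => by have := (c y).isLt; omega)
    (fun x y h hn => by
      have : ¬ c x < c y := fun hlt => hn ⟨h, hlt⟩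
      have := hne x y h
      omega) C
  -- The backward arcs are the forward arcs of the reversed orientation, along which `-c` increases.
  have hbwd := length_le_mul_fwdArcs (D := fun x y => G.Adj y x ∧ c y < c x)
    (fun x => -((c x : ℕ) : ℤ)) k (fun x y _ => by have := (c x).isLt; omega)
    (fun x y h hn => by
      have : ¬ c y < c x := fun hlt => hn ⟨h.symm, hlt⟩
      have := hne x y h
      omega) C
  refine max_le (div_le_of_le_mul₀ (by positivity) (by positivity) (by exact_mod_cast hfwd))
    (div_le_of_le_mul₀ (by positivity) (by positivity) (by exact_mod_cast hbwd))

theorem imb_nonneg (D : V → V → Prop) : 0 ≤ G.Imb D := by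
  refine Real.sSup_nonneg ?_
  rintro x (rfl | ⟨v, C, -, rfl⟩)
  · norm_num
  · positivity

theorem circChrom_eq_of_colorable {k : ℕ} (hk : 2 ≤ k) (hcol : G.Colorable k)
    (hle : ∀ D, G.IsAcyclicOrientation D → (k : ℝ) ≤ G.Imb D) : G.circChrom = k := by
  obtain ⟨c⟩ := hcol
  have hmem : G.Imb _ ∈ {x | ∃ D, G.IsAcyclicOrientation D ∧ x = G.Imb D} :=
    ⟨_, c.isAcyclicOrientation, rfl⟩
  refine le_antisymm ((csInf_le ⟨0, ?_⟩ hmem).trans (c.imb_le hk)) (le_csInf ⟨_, hmem⟩ ?_)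
  · rintro x ⟨D, -, rfl⟩
    exact imb_nonneg D
  · rintro x ⟨D, hD, rfl⟩
    exact hle D hD

theorem Colorable.myc {W : Type*} {G : SimpleGraph W} {k m : ℕ} (hm : 1 ≤ m)
    (h : G.Colorable k) : (Myc m G).Colorable (k + 1) := by
  obtain ⟨c⟩ := h
  refine ⟨Coloring.mk (fun x => match x with
    | none => 0
    | some (i, v) => if i.val = m then Fin.last k else (c v).castSucc) ?_⟩
  rintro (_ | ⟨i, v⟩) (_ | ⟨i', w⟩) hadj
  · exact hadj.elim
  · have hi' : i'.val = m := hadj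
    have hk := (c w).pos
    simp [hi', Fin.ext_iff]
    omega
  · have hi : i.val = m := hadj
    have hk := (c v).pos
    simp [hi, Fin.ext_iff]
    omega
  · obtain ⟨hvw, hlev⟩ := hadj
    have hcvw := c.valid hvw
    dsimp only
    split_ifs <;> simp [Fin.ext_iff, Fin.val_ne_iff.mpr hcvw] <;> omega

theorem Myc.sum_level_zero_eq_zero {W : Type*} {G : SimpleGraph W} {m n : ℕ} [NeZero n]
    (hm : 1 ≤ m) (u : Fin n → W) (hu : ∀ j, G.Adj (u j) (u (j + 1)))
    (hu₂ : ∀ j, u j ≠ u (j + 1 + 1))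
    (ω : Option (Fin (m + 1) × W) → Option (Fin (m + 1) × W) → ℤ)
    (hanti : ∀ x y, (Myc m G).Adj x y → ω y x = -ω x y)
    (hsq : ∀ a b c d, (Myc m G).Adj a b → (Myc m G).Adj b c → (Myc m G).Adj c d →
      (Myc m G).Adj d a → a ≠ c → b ≠ d → ω a b + ω b c = ω a d + ω d c) :
    ∑ j, ω (some (0, u j)) (some (0, u (j + 1))) = 0 := by
  obtain ⟨k, rfl⟩ : ∃ k, m = k + 1 := ⟨m - 1, by omega⟩
  let x (i : ℕ) (v : W) : Option (Fin (k + 1 + 1) × W) := some (Fin.ofNat (k + 1 + 1) i, v)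
  have hval : ∀ i ≤ k + 1, (Fin.ofNat (k + 1 + 1) i : ℕ) = i := fun i hi =>
    Nat.mod_eq_of_lt (by omega)
  have hup : ∀ i ≤ k, ∀ {v w}, G.Adj v w → (Myc (k + 1) G).Adj (x i v) (x (i + 1) w) :=
    fun i hi v w h => ⟨h, Or.inr (Or.inl (by rw [hval i (by omega), hval (i + 1) (by omega)]))⟩
  have hdown : ∀ i ≤ k, ∀ {v w}, G.Adj v w → (Myc (k + 1) G).Adj (x (i + 1) v) (x i w) :=
    fun i hi v w h => (hup i hi h.symm).symm
  have hflat : ∀ {v w}, G.Adj v w → (Myc (k + 1) G).Adj (x 0 v) (x 0 w) :=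
    fun h => ⟨h, Or.inl ⟨by simp, by simp⟩⟩
  have hroot : ∀ v, (Myc (k + 1) G).Adj (x (k + 1) v) none := fun _ => hval (k + 1) le_rfl
  have hne_level :
      ∀ i i', i ≤ k + 1 → i' ≤ k + 1 → i ≠ i' → ∀ v w, x i v ≠ x i' w := by
    intro i i' hi hi' h v w hx
    simp only [x, Option.some.injEq, Prod.mk.injEq] at hx
    exact h (by rw [← hval i hi, ← hval i' hi', hx.1])
  have hne_vertex : ∀ i j, x i (u j) ≠ x i (u (j + 1 + 1)) := fun i j hx =>
    hu₂ j (by simpa [x] using hx)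
  have hshift : ∀ g : Fin n → ℤ, ∑ j, g (j + 1) = ∑ j, g j := fun g =>
    Equiv.sum_comp (Equiv.addRight (1 : Fin n)) g
  let c (j : Fin n) := ω (x 0 (u j)) (x 0 (u (j + 1)))
  let a (i : ℕ) (j : Fin n) := ω (x i (u j)) (x (i + 1) (u (j + 1)))
  let b (i : ℕ) (j : Fin n) := ω (x (i + 1) (u j)) (x i (u (j + 1)))
  -- `Z i` is the signed length of the closed zig-zag walk
  -- `(i, u 0) → (i + 1, u 1) → (i, u 2) → ⋯` between levels `i` and `i + 1`.
  let Z (i : ℕ) := ∑ j, a i j + ∑ j, b i j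
  have hbottom : 2 * ∑ j, c j = Z 0 := by
    have hsq₀ : ∀ j, c j + c (j + 1) = a 0 j + b 0 (j + 1) := fun j =>
      hsq _ _ _ _ (hflat (hu j)) (hflat (hu (j + 1))) (hup 0 (Nat.zero_le _) (hu (j + 1)).symm)
        (hdown 0 (Nat.zero_le _) (hu j).symm) (hne_vertex 0 j)
        (hne_level 0 1 (by omega) (by omega) (by omega) _ _)
    have : ∑ j, (c j + c (j + 1)) = ∑ j, (a 0 j + b 0 (j + 1)) := Fintype.sum_congr _ _ hsq₀
    rw [Finset.sum_add_distrib, Finset.sum_add_distrib, hshift c, hshift (b 0)] at this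
    rw [two_mul, this]
  have hstep : ∀ i, i + 1 ≤ k → Z (i + 1) = Z i := by
    intro i hi
    have hsq₁ : ∀ j, b i j + a i (j + 1) = a (i + 1) j + b (i + 1) (j + 1) := fun j =>
      hsq _ _ _ _ (hdown i (by omega) (hu j)) (hup i (by omega) (hu (j + 1)))
        (hup (i + 1) hi (hu (j + 1)).symm) (hdown (i + 1) hi (hu j).symm) (hne_vertex (i + 1) j)
        (hne_level i (i + 2) (by omega) (by omega) (by omega) _ _)
    have : ∑ j, (b i j + a i (j + 1)) = ∑ j, (a (i + 1) j + b (i + 1) (j + 1)) :=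
      Fintype.sum_congr _ _ hsq₁
    rw [Finset.sum_add_distrib, Finset.sum_add_distrib, hshift (a i), hshift (b (i + 1))] at this
    simp only [Z]
    linarith
  have htop : Z k = 0 := by
    let ρ (j : Fin n) := ω (x (k + 1) (u j)) none
    have hsq₂ : ∀ j, b k j + a k (j + 1) = ρ j - ρ (j + 1 + 1) := fun j => by
      rw [sub_eq_add_neg, ← hanti _ _ (hroot _)]
      exact hsq _ _ _ _ (hdown k le_rfl (hu j)) (hup k le_rfl (hu (j + 1))) (hroot _)
        (hroot _).symm (hne_vertex (k + 1) j) (Option.some_ne_none _)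
    have : ∑ j, (b k j + a k (j + 1)) = ∑ j, (ρ j - ρ (j + 1 + 1)) :=
      Fintype.sum_congr _ _ hsq₂
    rw [Finset.sum_add_distrib, Finset.sum_sub_distrib, hshift (a k),
      hshift (fun j => ρ (j + 1)), hshift ρ, sub_self] at this
    simp only [Z]
    linarith
  have hconst : ∀ i ≤ k, Z i = Z 0 := by
    intro i hi
    induction i with
    | zero => rfl
    | succ i ih => rw [hstep i hi, ih (by omega)]
  have : 2 * ∑ j, c j = 0 := by rw [hbottom, ← hconst k le_rfl, htop]
  simpa [c, x] using this

theorem Myc.four_le_imb {W : Type*} [Fintype W] {G : SimpleGraph W} {m n : ℕ} [NeZero n]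
    (hm : 1 ≤ m) (hn : Odd n) (u : Fin n → W) (hu : ∀ j, G.Adj (u j) (u (j + 1)))
    (hu₂ : ∀ j, u j ≠ u (j + 1 + 1))
    {D : Option (Fin (m + 1) × W) → Option (Fin (m + 1) × W) → Prop}
    (hD : (Myc m G).IsAcyclicOrientation D) : 4 ≤ (Myc m G).Imb D := by
  by_contra! hImb
  have hzero := Myc.sum_level_zero_eq_zero hm u hu hu₂ (orientSign D)
    (fun _ _ h => hD.isOrientation.orientSign_swap h)
    (fun _ _ _ _ hab hbc hcd hda hac hbd => hD.orientSign_square hImb hab hbc hcd hda hac hbd)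
  have hodd := odd_sum_of_forall_odd (by simpa using hn) fun j =>
    odd_orientSign D (some (0, u j)) (some (0, u (j + 1)))
  rw [hzero] at hodd
  exact Int.not_odd_zero hodd

theorem cycleGraph_adj_add_one {n : ℕ} [NeZero n] (hn : 2 ≤ n) (j : Fin n) :
    (cycleGraph n).Adj j (j + 1) := by
  rw [cycleGraph_adj']
  right
  simp [Nat.mod_eq_of_lt hn]

end SimpleGraph

/-- For `s > 1` and `m ≥ 1`, the circular chromatic number of `M_m(C_{2s+1})` equals `4`. -/
theorem circChrom_myc_odd_cycle (m s : ℕ) (hm : 1 ≤ m) (hs : 1 < s) :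
    (SimpleGraph.Myc m (cycleGraph (2 * s + 1))).circChrom = 4 := by
  have hcol : (cycleGraph (2 * s + 1)).Colorable 3 :=
    (cycleGraph.tricoloring _ (by omega)).colorable
  have hlow : ∀ D, (Myc m (cycleGraph (2 * s + 1))).IsAcyclicOrientation D →
      4 ≤ (Myc m (cycleGraph (2 * s + 1))).Imb D := fun D hD =>
    Myc.four_le_imb hm (odd_two_mul_add_one s) id (cycleGraph_adj_add_one (by omega))
      (Fin.ne_add_one_add_one (by omega)) hD
  exact_mod_cast circChrom_eq_of_colorable (k := 4) (by norm_num) (hcol.myc hm)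
    (by exact_mod_cast hlow)
end
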